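/- arXiv:2002.03171 — 4 statements merged into one kernel-verified Lean document; each statement's English description precedes it below -/
import Mathlib

section
/- Let (X, d) be an uncountable compact metric space. Then there exists no reproducing kernel Hilbert space H on X such that C(X) ⊆ H, where C(X) denotes the space of continuous real-valued functions on X. -/
/-!
By the closed graph theorem the inclusion `T : C(X) → H` is bounded, and each point evaluation
`h ↦ ι h x` is a bounded functional, say `|ι h x| ≤ C x ‖h‖`. Since `X` is uncountable, some
sublevel set `{x | C x ≤ n}` is infinite; pick `N` points in it and bumps `f_x` with `f_x(x) = 1`
and disjoint supports. Then `1 = f_x(x) ≤ n ‖T f_x‖`, while `‖∑ ± f_x‖ ≤ 1` for every choice of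
signs, and choosing the signs greedily in the Hilbert space `H` gives `∑ ‖T f_x‖² ≤ ‖T‖²`.
Hence `N ≤ n² ‖T‖²` for every `N`, which is absurd.
-/

open Function Set

theorem exists_abs_eq_one_sum_sq_norm_le_sq_norm_sum
    {ι E : Type*} [NormedAddCommGroup E] [InnerProductSpace ℝ E] (s : Finset ι) (v : ι → E) :
    ∃ ε : ι → ℝ, (∀ i, |ε i| = 1) ∧ ∑ i ∈ s, ‖v i‖ ^ 2 ≤ ‖∑ i ∈ s, ε i • v i‖ ^ 2 := by
  classical
  induction s using Finset.induction_on with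
  | empty => exact ⟨fun _ => 1, fun _ => abs_one, by simp⟩
  | insert a s ha ih =>
    obtain ⟨ε, hε, hsum⟩ := ih
    set w := ∑ i ∈ s, ε i • v i
    obtain ⟨σ, hσ, hcross⟩ : ∃ σ : ℝ, |σ| = 1 ∧ 0 ≤ σ * inner ℝ w (v a) := by
      rcases le_total 0 (inner ℝ w (v a)) with h | h
      · exact ⟨1, abs_one, by simpa using h⟩
      · exact ⟨-1, by simp, by simpa using h⟩
    refine ⟨update ε a σ, fun i => ?_, ?_⟩
    · rcases eq_or_ne i a with rfl | hi
      · simpa using hσ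
      · simpa [hi] using hε i
    have hw : ∑ i ∈ s, update ε a σ i • v i = w :=
      Finset.sum_congr rfl fun i hi => by rw [update_of_ne (ne_of_mem_of_not_mem hi ha)]
    rw [Finset.sum_insert ha, Finset.sum_insert ha, update_self, hw, add_comm (σ • v a),
      norm_add_sq_real, real_inner_smul_right, norm_smul, Real.norm_eq_abs, hσ, one_mul]
    linarith

theorem ContinuousMap.norm_sum_smul_le_one_of_pairwiseDisjoint_support
    {X ι : Type*} [TopologicalSpace X] [CompactSpace X] (s : Finset ι) (f : ι → C(X, ℝ))
    (hf : ∀ i ∈ s, ‖f i‖ ≤ 1) (hdisj : (s : Set ι).PairwiseDisjoint fun i => support (f i))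
    (ε : ι → ℝ) (hε : ∀ i, |ε i| ≤ 1) :
    ‖∑ i ∈ s, ε i • f i‖ ≤ 1 := by
  refine (ContinuousMap.norm_le _ zero_le_one).2 fun y => ?_
  have hy : (∑ i ∈ s, ε i • f i) y = ∑ i ∈ s, ε i * f i y := by simp [ContinuousMap.sum_apply]
  rw [hy, Real.norm_eq_abs]
  by_cases h : ∃ j ∈ s, f j y ≠ 0
  · obtain ⟨j, hj, hjy⟩ := h
    have hsingle : ∑ i ∈ s, ε i * f i y = ε j * f j y := by
      refine Finset.sum_eq_single_of_mem j hj fun i hi hij => ?_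
      have hiy : f i y = 0 := by
        by_contra hiy
        exact Set.disjoint_left.1 (hdisj hi hj hij) hiy hjy
      rw [hiy, mul_zero]
    calc |∑ i ∈ s, ε i * f i y| = |ε j| * ‖f j y‖ := by rw [hsingle, abs_mul, Real.norm_eq_abs]
      _ ≤ 1 * 1 := by
        gcongr
        exacts [hε j, (f j).norm_coe_le_norm y |>.trans (hf j hj)]
      _ = 1 := one_mul 1
  · push Not at h
    rw [Finset.sum_eq_zero fun i hi => by rw [h i hi, mul_zero], abs_zero]
    exact zero_le_one

theorem ContinuousLinearMap.sum_sq_norm_apply_le_sq_opNorm_of_pairwiseDisjoint_support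
    {X ι E : Type*} [TopologicalSpace X] [CompactSpace X]
    [NormedAddCommGroup E] [InnerProductSpace ℝ E] (T : C(X, ℝ) →L[ℝ] E)
    (s : Finset ι) (f : ι → C(X, ℝ)) (hf : ∀ i ∈ s, ‖f i‖ ≤ 1)
    (hdisj : (s : Set ι).PairwiseDisjoint fun i => support (f i)) :
    ∑ i ∈ s, ‖T (f i)‖ ^ 2 ≤ ‖T‖ ^ 2 := by
  obtain ⟨ε, hε, hsum⟩ := exists_abs_eq_one_sum_sq_norm_le_sq_norm_sum s fun i => T (f i)
  have hg : ‖∑ i ∈ s, ε i • f i‖ ≤ 1 :=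
    ContinuousMap.norm_sum_smul_le_one_of_pairwiseDisjoint_support s f hf hdisj ε fun i =>
      (hε i).le
  calc ∑ i ∈ s, ‖T (f i)‖ ^ 2 ≤ ‖T (∑ i ∈ s, ε i • f i)‖ ^ 2 := by simpa using hsum
    _ ≤ (‖T‖ * ‖∑ i ∈ s, ε i • f i‖) ^ 2 := by gcongr; exact T.le_opNorm _
    _ ≤ (‖T‖ * 1) ^ 2 := by gcongr
    _ = ‖T‖ ^ 2 := by rw [mul_one]

theorem exists_continuousLinearMap_inclusion
    {X H : Type*} [TopologicalSpace X] [CompactSpace X]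
    [NormedAddCommGroup H] [NormedSpace ℝ H] [CompleteSpace H]
    (ι : H →ₗ[ℝ] (X → ℝ)) (hinj : Injective ι) (heval : ∀ x : X, Continuous fun h : H => ι h x)
    (hsub : ∀ f : C(X, ℝ), ⇑f ∈ LinearMap.range ι) :
    ∃ T : C(X, ℝ) →L[ℝ] H, ∀ f, ι (T f) = f := by
  let T : C(X, ℝ) →ₗ[ℝ] H := (LinearEquiv.ofInjective ι hinj).symm ∘ₗ
    (ContinuousMap.coeFnLinearMap ℝ).codRestrict (LinearMap.range ι) hsub
  have hT : ∀ f, ι (T f) = f := fun f => LinearEquiv.ofInjective_symm_apply (h := hinj) ι _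
  refine ⟨⟨T, T.continuous_of_seq_closed_graph fun u f h hu hTu => hinj ?_⟩, hT⟩
  funext x
  refine tendsto_nhds_unique (((heval x).tendsto h).comp hTu) ?_
  simpa [comp_def, hT] using ((continuous_eval_const x).tendsto f).comp hu

theorem exists_nat_not_countable_setOf_le {X : Type*} (hX : ¬ Countable X) (g : X → ℝ) :
    ∃ n : ℕ, ¬ {x | g x ≤ n}.Countable := by
  by_contra! h
  refine hX (Set.countable_univ_iff.1 ?_)
  rw [← Set.iUnion_eq_univ_iff.2 fun x =>
    (⟨⌈g x⌉₊, Nat.le_ceil (g x)⟩ : ∃ n : ℕ, x ∈ {x | g x ≤ n})]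
  exact Set.countable_iUnion h

theorem Finset.exists_pairwiseDisjoint_support_bump {X : Type*} [TopologicalSpace X] [T4Space X]
    (s : Finset X) :
    ∃ f : X → C(X, ℝ), (∀ x, f x x = 1) ∧ (∀ x y, f x y ∈ Set.Icc 0 1) ∧
      (s : Set X).PairwiseDisjoint fun x => support (f x) := by
  obtain ⟨U, hU, hdisj⟩ := s.finite_toSet.t2_separation
  have hbump : ∀ x, ∃ g : C(X, ℝ), EqOn g 0 (U x)ᶜ ∧ EqOn g 1 {x} ∧ ∀ y, g y ∈ Set.Icc (0 : ℝ) 1 :=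
    fun x => exists_continuous_zero_one_of_isClosed (hU x).2.isClosed_compl isClosed_singleton
      (Set.disjoint_singleton_right.2 (notMem_compl_iff.2 (hU x).1))
  choose f hf0 hf1 hf using hbump
  refine ⟨f, fun x => hf1 x rfl, hf, hdisj.mono fun x y hy => ?_⟩
  by_contra hxy
  exact hy (hf0 x hxy)

/-- An uncountable compact metric space admits no RKHS `H` (a Hilbert space of
real-valued functions on `X`, realized via an injective linear map `ι` with
continuous point evaluations) such that `C(X) ⊆ H`. -/
theorem no_RKHS_containing_continuous_functions
    {X : Type*} [MetricSpace X] [CompactSpace X] (hX : ¬ Countable X)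
    (H : Type*) [NormedAddCommGroup H] [InnerProductSpace ℝ H] [CompleteSpace H]
    (ι : H →ₗ[ℝ] (X → ℝ)) (hinj : Function.Injective ι)
    (heval : ∀ x : X, Continuous fun h : H => ι h x)
    (hsub : ∀ f : X → ℝ, Continuous f → f ∈ Set.range ι) : False := by
  obtain ⟨T, hT⟩ := exists_continuousLinearMap_inclusion ι hinj heval fun f => hsub f f.continuous
  choose C _ hC using fun x =>
    SemilinearMapClass.bound_of_continuous (LinearMap.proj x ∘ₗ ι) (heval x)
  obtain ⟨n, hn⟩ := exists_nat_not_countable_setOf_le hX C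
  have hinf : {x | C x ≤ n}.Infinite := fun h => hn h.countable
  obtain ⟨s, hsn, hcard⟩ := hinf.exists_subset_card_eq (⌈(n : ℝ) ^ 2 * ‖T‖ ^ 2⌉₊ + 1)
  obtain ⟨f, hf1, hf, hdisj⟩ := s.exists_pairwiseDisjoint_support_bump
  have hfnorm : ∀ x ∈ s, ‖f x‖ ≤ 1 := fun x _ =>
    (ContinuousMap.norm_le _ zero_le_one).2 fun y =>
      (Real.norm_of_nonneg (hf x y).1).trans_le (hf x y).2
  have hlower : ∀ x ∈ s, 1 ≤ (n : ℝ) ^ 2 * ‖T (f x)‖ ^ 2 := fun x hx => by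
    have h1 : 1 ≤ (n : ℝ) * ‖T (f x)‖ :=
      calc (1 : ℝ) = ‖ι (T (f x)) x‖ := by rw [hT, hf1, norm_one]
        _ ≤ C x * ‖T (f x)‖ := hC x _
        _ ≤ n * ‖T (f x)‖ := by gcongr; exact hsn hx
    simpa [mul_pow] using one_le_pow₀ (n := 2) h1
  have hupper := T.sum_sq_norm_apply_le_sq_opNorm_of_pairwiseDisjoint_support s f hfnorm hdisj
  have hcard_le : (s.card : ℝ) ≤ (n : ℝ) ^ 2 * ‖T‖ ^ 2 :=
    calc (s.card : ℝ) ≤ ∑ x ∈ s, (n : ℝ) ^ 2 * ‖T (f x)‖ ^ 2 := by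
          simpa using Finset.card_nsmul_le_sum s _ 1 hlower
      _ ≤ (n : ℝ) ^ 2 * ‖T‖ ^ 2 := by rw [← Finset.mul_sum]; gcongr
  rw [hcard, Nat.cast_add, Nat.cast_one] at hcard_le
  linarith [Nat.le_ceil ((n : ℝ) ^ 2 * ‖T‖ ^ 2)]
end

section
/- Let X be an uncountable set. Then there exists no reproducing kernel Hilbert space H on X such that ℓ∞(X) ⊆ H, where ℓ∞(X) is the space of all bounded real-valued functions on X. -/
/-!
The inclusion `ℓ∞(X) → H` has closed graph because point evaluations are continuous on both
spaces, so it is a bounded operator `T`. For every finite `s ⊆ X` and every choice of signs,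
`∑_{x ∈ s} ±δₓ` has sup norm `1`, so all signed sums of the vectors `T δₓ` have norm at most
`‖T‖`; by the parallelogram law this forces `∑_{x ∈ s} ‖T δₓ‖² ≤ ‖T‖²`. Hence `x ↦ ‖T δₓ‖²` is
summable, so it vanishes off a countable set; but `T` is injective, so `T δₓ ≠ 0` for every `x`.
-/

open scoped ENNReal

theorem sum_norm_sq_le_of_forall_signs {ι E : Type*} [NormedAddCommGroup E]
    [InnerProductSpace ℝ E] (s : Finset ι) (v : ι → E) {B : ℝ}
    (h : ∀ ε : ι → ℝ, (∀ i, ε i = 1 ∨ ε i = -1) → ‖∑ i ∈ s, ε i • v i‖ ^ 2 ≤ B) :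
    ∑ i ∈ s, ‖v i‖ ^ 2 ≤ B := by
  classical
  induction s using Finset.induction_on generalizing B with
  | empty => simpa using h (fun _ => 1) (fun _ => Or.inl rfl)
  | insert a s ha ih =>
    rw [Finset.sum_insert ha, add_comm, ← le_sub_iff_add_le]
    refine ih fun ε hε => ?_
    set w := ∑ i ∈ s, ε i • v i
    have hflip : ∀ c : ℝ, c = 1 ∨ c = -1 → ‖c • v a + w‖ ^ 2 ≤ B := by
      intro c hc
      have hsum : ∑ i ∈ insert a s, Function.update ε a c i • v i = c • v a + w := by
        rw [Finset.sum_insert ha, Function.update_self]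
        congr 1
        refine Finset.sum_congr rfl fun i hi => ?_
        rw [Function.update_of_ne (ne_of_mem_of_not_mem hi ha)]
      refine hsum ▸ h _ fun i => ?_
      rcases eq_or_ne i a with rfl | hi
      · rwa [Function.update_self]
      · rw [Function.update_of_ne hi]
        exact hε i
    have hplus := hflip 1 (Or.inl rfl)
    have hminus := hflip (-1) (Or.inr rfl)
    rw [one_smul, add_comm] at hplus
    rw [neg_one_smul, neg_add_eq_sub] at hminus
    linarith [parallelogram_law_with_norm ℝ w (v a)]

theorem exists_continuousLinearMap_comp_eq_of_range_subset {𝕜 E H F : Type*}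
    [NontriviallyNormedField 𝕜] [NormedAddCommGroup E] [NormedSpace 𝕜 E] [CompleteSpace E]
    [NormedAddCommGroup H] [NormedSpace 𝕜 H] [CompleteSpace H]
    [AddCommGroup F] [Module 𝕜 F] [TopologicalSpace F] [T2Space F]
    (j : E →L[𝕜] F) (ι : H →L[𝕜] F) (hι : Function.Injective ι)
    (hrange : Set.range j ⊆ Set.range ι) :
    ∃ T : E →L[𝕜] H, ∀ x, ι (T x) = j x := by
  let e := LinearEquiv.ofInjective (ι : H →ₗ[𝕜] F) hι
  let T : E →ₗ[𝕜] H :=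
    e.symm.toLinearMap ∘ₗ (j : E →ₗ[𝕜] F).codRestrict _ fun x => hrange ⟨x, rfl⟩
  have hT : ∀ x, ι (T x) = j x := fun x =>
    congrArg Subtype.val (e.apply_symm_apply ⟨j x, hrange ⟨x, rfl⟩⟩)
  have hgraph : (T.graph : Set (E × H)) = {p | ι p.2 = j p.1} := by
    ext p
    simp only [SetLike.mem_coe, LinearMap.mem_graph_iff, Set.mem_ofPred_eq, ← hT]
    exact hι.eq_iff.symm
  have hclosed : IsClosed (T.graph : Set (E × H)) :=
    hgraph ▸ isClosed_eq (ι.continuous.comp continuous_snd) (j.continuous.comp continuous_fst)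
  exact ⟨.ofIsClosedGraph hclosed, hT⟩

namespace lp

theorem norm_sum_single_top_le {α : Type*} {E : α → Type*} [∀ i, NormedAddCommGroup (E i)]
    [DecidableEq α] (s : Finset α) (f : ∀ i, E i) {C : ℝ} (hC : 0 ≤ C)
    (hf : ∀ i, ‖f i‖ ≤ C) : ‖∑ i ∈ s, lp.single ∞ i (f i)‖ ≤ C := by
  refine lp.norm_le_of_forall_le hC fun i => ?_
  simp only [lp.coeFn_sum, lp.coeFn_single, Finset.sum_apply, Finset.sum_pi_single]
  split_ifs
  · exact hf i
  · simpa using hC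

theorem summable_norm_sq_apply_single {X E : Type*} [DecidableEq X] [NormedAddCommGroup E]
    [InnerProductSpace ℝ E] (T : lp (fun _ : X => ℝ) ∞ →L[ℝ] E) :
    Summable fun x => ‖T (lp.single ∞ x 1)‖ ^ 2 := by
  refine summable_of_sum_le (c := ‖T‖ ^ 2) (fun _ => sq_nonneg _) fun s =>
    sum_norm_sq_le_of_forall_signs s _ fun ε hε => ?_
  have hsum : ∑ x ∈ s, ε x • T (lp.single ∞ x 1) = T (∑ x ∈ s, lp.single ∞ x (ε x)) := by
    simp only [map_sum, ← map_smul, ← lp.single_smul, smul_eq_mul, mul_one]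
  have hsigns : ‖∑ x ∈ s, lp.single ∞ x (ε x)‖ ≤ 1 :=
    norm_sum_single_top_le s ε zero_le_one fun x => by rcases hε x with h | h <;> simp [h]
  rw [hsum]
  gcongr
  calc ‖T (∑ x ∈ s, lp.single ∞ x (ε x))‖ ≤ ‖T‖ * ‖∑ x ∈ s, lp.single ∞ x (ε x)‖ :=
        T.le_opNorm _
    _ ≤ ‖T‖ := mul_le_of_le_one_right (norm_nonneg T) hsigns

theorem countable_of_injective_continuousLinearMap_top {X E : Type*} [NormedAddCommGroup E]
    [InnerProductSpace ℝ E] (T : lp (fun _ : X => ℝ) ∞ →L[ℝ] E) (hT : Function.Injective T) :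
    Countable X := by
  classical
  have hsupport : Function.support (fun x => ‖T (lp.single ∞ x 1)‖ ^ 2) = Set.univ := by
    refine Set.eq_univ_of_forall fun x => ?_
    have hsingle : lp.single (E := fun _ : X => ℝ) ∞ x 1 ≠ 0 := fun h => by
      simpa using congrArg (fun f : lp (fun _ : X => ℝ) ∞ => (f : X → ℝ) x) h
    simpa using (map_ne_zero_iff T hT).mpr hsingle
  rw [← Set.countable_univ_iff, ← hsupport]
  exact (summable_norm_sq_apply_single T).countable_support

end lp

/-- For an uncountable set `X`, there is no RKHS `H` on `X` (a Hilbert space of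
real-valued functions on `X` with continuous point evaluations) such that
`ℓ∞(X) ⊆ H`. -/
theorem no_RKHS_containing_bounded_functions
    {X : Type*} (hX : ¬ Countable X)
    (H : Type*) [NormedAddCommGroup H] [InnerProductSpace ℝ H] [CompleteSpace H]
    (ι : H →ₗ[ℝ] (X → ℝ)) (hinj : Function.Injective ι)
    (heval : ∀ x : X, Continuous fun h : H => ι h x)
    (hsub : ∀ f : X → ℝ, (∃ C : ℝ, ∀ x, |f x| ≤ C) → f ∈ Set.range ι) : False := by
  let ιL : H →L[ℝ] (X → ℝ) := ⟨ι, continuous_pi heval⟩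
  let coe : lp (fun _ : X => ℝ) ∞ →L[ℝ] (X → ℝ) :=
    ContinuousLinearMap.pi (lp.evalCLM ℝ (fun _ : X => ℝ) ∞)
  have hrange : Set.range coe ⊆ Set.range ιL := by
    rintro _ ⟨f, rfl⟩
    exact hsub f ⟨‖f‖, fun x => lp.norm_apply_le_norm ENNReal.top_ne_zero f x⟩
  obtain ⟨T, hT⟩ := exists_continuousLinearMap_comp_eq_of_range_subset coe ιL hinj hrange
  refine hX (lp.countable_of_injective_continuousLinearMap_top T fun f g hfg => lp.ext ?_)
  have hcoe := congrArg ιL hfg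
  rwa [hT, hT] at hcoe
end

section
/- Let E be a Banach space of real-valued functions on a set A (with its own complete norm) and H an RKHS on A with a bounded kernel, such that E ⊆ H as sets and the sup-norm on E is dominated by the E-norm. Then the inclusion map id : E → H is continuous, i.e., there exists K < ∞ with ‖f‖_H ≤ K ‖f‖_E for all f ∈ E. -/
open scoped RealInnerProductSpace

/-- If `E` is a Banach space of functions on `A` whose norm dominates the sup norm,
and `H` is an RKHS on `A` with bounded kernel with `E ⊆ H`, then the inclusion
`E → H` is continuous: `‖f‖_H ≤ K ‖f‖_E`. -/
theorem inclusion_into_RKHS_continuous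
    {A : Type*}
    (E : Type*) [NormedAddCommGroup E] [NormedSpace ℝ E] [CompleteSpace E]
    (j : E →ₗ[ℝ] (A → ℝ)) (hjinj : Function.Injective j)
    (C : ℝ) (hC : ∀ (f : E) (x : A), |j f x| ≤ C * ‖f‖)
    (H : Type*) [NormedAddCommGroup H] [InnerProductSpace ℝ H] [CompleteSpace H]
    (ι : H →ₗ[ℝ] (A → ℝ)) (hinj : Function.Injective ι)
    (k : A → A → ℝ) (Φ : A → H)
    (hfeat : ∀ x y : A, ι (Φ x) y = k y x)
    (hrep : ∀ (h : H) (x : A), ι h x = ⟪h, Φ x⟫)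
    (m : ℝ) (hk : ∀ x : A, k x x ≤ m)
    (hsub : Set.range j ⊆ Set.range ι) :
    ∃ K : ℝ, ∀ (f : E) (h : H), ι h = j f → ‖h‖ ≤ K * ‖f‖ := by
  have hchoose : ∀ f : E, ∃ h : H, ι h = j f := fun f => hsub (Set.mem_range_self f)
  have hT : ∀ f, ι ((hchoose f).choose) = j f := fun f => (hchoose f).choose_spec
  let T : E →ₗ[ℝ] H :=
    { toFun := fun f => (hchoose f).choose
      map_add' := fun f g => hinj <|
        (hT _).trans <| (map_add j f g).trans <|
          ((map_add ι _ _).trans (congrArg₂ (· + ·) (hT f) (hT g))).symm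
      map_smul' := fun c f => hinj <|
        (hT _).trans <| (map_smul j c f).trans <|
          ((map_smul ι c _).trans (congrArg (c • ·) (hT f))).symm }
  have hTapp : ∀ f, ι (T f) = j f := hT
  have hclosed : IsClosed (T.graph : Set (E × H)) := by
    apply IsSeqClosed.isClosed
    intro u p hu hup
    rw [SetLike.mem_coe, T.mem_graph_iff]
    have hmem : ∀ n, (u n).2 = T (u n).1 := fun n => (T.mem_graph_iff _).mp (hu n)
    have h1 : Filter.Tendsto (fun n => (u n).1) Filter.atTop (nhds p.1) :=
      (continuous_fst.tendsto p).comp hup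
    have h2 : Filter.Tendsto (fun n => (u n).2) Filter.atTop (nhds p.2) :=
      (continuous_snd.tendsto p).comp hup
    -- pointwise limits
    have key : ∀ x : A, j p.1 x = ι p.2 x := by
      intro x
      have hE : Filter.Tendsto (fun n => j (u n).1 x) Filter.atTop (nhds (j p.1 x)) := by
        rw [tendsto_iff_norm_sub_tendsto_zero]
        have hn : Filter.Tendsto (fun n => C * ‖(u n).1 - p.1‖) Filter.atTop (nhds 0) := by
          have := (tendsto_iff_norm_sub_tendsto_zero.mp h1).const_mul C
          simpa using this
        refine squeeze_zero (fun n => norm_nonneg _) (fun n => ?_) hn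
        have : j (u n).1 x - j p.1 x = j ((u n).1 - p.1) x := by simp
        rw [Real.norm_eq_abs, this]
        exact hC _ x
      have hH : Filter.Tendsto (fun n => ι (u n).2 x) Filter.atTop (nhds (ι p.2 x)) := by
        simp only [hrep]
        exact (Continuous.inner continuous_id continuous_const).continuousAt.tendsto.comp h2
      have : ∀ n, j (u n).1 x = ι (u n).2 x := by
        intro n; rw [hmem n]; exact (congrFun (hTapp _) x).symm
      rw [Filter.tendsto_congr this] at hE
      exact tendsto_nhds_unique hE hH
    exact hinj <| (funext fun x => (key x).symm).trans (hTapp p.1).symm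
  have hcont : Continuous T := T.continuous_of_isClosed_graph hclosed
  let Tc : E →L[ℝ] H := ⟨T, hcont⟩
  refine ⟨‖Tc‖, fun f h hfh => ?_⟩
  have : h = T f := hinj (hfh.trans (hTapp f).symm)
  rw [this]
  exact Tc.le_opNorm f
end

section
/- Let (X, d) be an uncountable compact metric space and H an RKHS on X with continuous kernel k. Then the inclusion C(X) ⊆ H fails; consequently H ⊊ C(X) whenever k is continuous (since then H ⊆ C(X)). -/
/-!
If `C(X) ⊆ H`, then `h ↦ ⟪h, Φ ·⟫` is a bounded linear surjection of `H` onto `C(X)`, so by the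
open mapping theorem every `f ∈ C(X)` is `⟪h, Φ ·⟫` for some `h` with `‖h‖ ≤ C ‖f‖`, whence
`|f y - f x₀| ≤ C ‖f‖ ‖Φ y - Φ x₀‖`. The feature map `Φ` is continuous because the kernel is, and
a compact uncountable `X` has a non-isolated point `x₀`; choosing `y ≠ x₀` close to `x₀` and a
Urysohn function with `f x₀ = 0`, `f y = 1`, `‖f‖ ≤ 1` gives `1 ≤ C ‖Φ y - Φ x₀‖ < 1`.
-/

open scoped RealInnerProductSpace

open Filter Topology

theorem continuous_of_continuous_inner {X H : Type*} [TopologicalSpace X]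
    [SeminormedAddCommGroup H] [InnerProductSpace ℝ H] {Φ : X → H}
    (hΦ : Continuous fun p : X × X => ⟪Φ p.1, Φ p.2⟫) : Continuous Φ := by
  refine continuous_iff_continuousAt.2 fun x => tendsto_iff_norm_sub_tendsto_zero.2 ?_
  have hgram : Continuous fun y => ⟪Φ y, Φ y⟫ - ⟪Φ y, Φ x⟫ - ⟪Φ x, Φ y⟫ + ⟪Φ x, Φ x⟫ :=
    ((hΦ.comp (continuous_id.prodMk continuous_id)).sub
      (hΦ.comp (continuous_id.prodMk continuous_const))).sub
      (hΦ.comp (continuous_const.prodMk continuous_id)) |>.add continuous_const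
  have hsq : Tendsto (fun y => ‖Φ y - Φ x‖ ^ 2) (𝓝 x) (𝓝 0) := by
    have := hgram.tendsto x
    simp only [sub_self, zero_sub, neg_add_cancel] at this
    simpa only [← real_inner_self_eq_norm_sq, inner_sub_sub_self] using this
  simpa using hsq.sqrt

theorem ContinuousMap.exists_norm_le_one_apply_eq_zero_apply_eq_one {X : Type*}
    [TopologicalSpace X] [CompactSpace X] [T2Space X] {x y : X} (hxy : x ≠ y) :
    ∃ f : C(X, ℝ), ‖f‖ ≤ 1 ∧ f x = 0 ∧ f y = 1 := by
  obtain ⟨f, hfx, hfy, hf01⟩ := exists_continuous_zero_one_of_isClosed isClosed_singleton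
    isClosed_singleton (Set.disjoint_singleton.2 hxy)
  refine ⟨f, (f.norm_le zero_le_one).2 fun z => ?_, hfx rfl, hfy rfl⟩
  rw [Real.norm_of_nonneg (hf01 z).1]
  exact (hf01 z).2

theorem ContinuousLinearMap.not_surjective_of_continuousAt_evalCLM_comp {E X : Type*}
    [NormedAddCommGroup E] [NormedSpace ℝ E] [CompleteSpace E]
    [TopologicalSpace X] [CompactSpace X] [T2Space X]
    (A : E →L[ℝ] C(X, ℝ)) {x₀ : X} [(𝓝[≠] x₀).NeBot]
    (hA : ContinuousAt (fun x => (ContinuousMap.evalCLM ℝ x).comp A) x₀) :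
    ¬ Function.Surjective A := by
  intro hsurj
  obtain ⟨C, hC, hpre⟩ := A.exists_preimage_norm_le hsurj
  set L := fun x => (ContinuousMap.evalCLM ℝ x).comp A
  obtain ⟨y, hyL, hy⟩ : ∃ y, dist (L y) (L x₀) < C⁻¹ ∧ y ≠ x₀ :=
    ((hA.mono_left (nhdsWithin_le_nhds (s := {x₀}ᶜ))).eventually
      (Metric.ball_mem_nhds (L x₀) (inv_pos.2 hC)) |>.and self_mem_nhdsWithin).exists
  obtain ⟨f, hf, hfx₀, hfy⟩ := ContinuousMap.exists_norm_le_one_apply_eq_zero_apply_eq_one hy.symm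
  obtain ⟨e, rfl, he⟩ := hpre f
  have hLe : (L y - L x₀) e = 1 := by simp [L, hfy, hfx₀]
  have he_le : ‖e‖ ≤ C := he.trans (mul_le_of_le_one_right hC.le hf)
  have : (1 : ℝ) < 1 := calc
    (1 : ℝ) = (L y - L x₀) e := hLe.symm
    _ ≤ ‖L y - L x₀‖ * ‖e‖ := (le_abs_self _).trans ((L y - L x₀).le_opNorm e)
    _ ≤ ‖L y - L x₀‖ * C := mul_le_mul_of_nonneg_left he_le (norm_nonneg _)
    _ < C⁻¹ * C := mul_lt_mul_of_pos_right (by rwa [← dist_eq_norm]) hC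
    _ = 1 := inv_mul_cancel₀ hC.ne'
  exact lt_irrefl _ this

namespace ContinuousMap

variable {X H : Type*} [TopologicalSpace X] [NormedAddCommGroup H] [InnerProductSpace ℝ H]

def innerCLM (Φ : C(X, H)) : H →L[ℝ] C(X, ℝ) where
  toFun h := ⟨fun x => ⟪h, Φ x⟫, continuous_const.inner Φ.continuous⟩
  map_add' h h' := by ext; simp [inner_add_left]
  map_smul' c h := by ext; simp [real_inner_smul_left]
  cont := continuous_of_continuous_uncurry _ <|
    continuous_fst.inner (Φ.continuous.comp continuous_snd)

theorem evalCLM_comp_innerCLM (Φ : C(X, H)) (x : X) :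
    (evalCLM ℝ x).comp (innerCLM Φ) = innerSL ℝ (Φ x) := by
  ext h
  exact real_inner_comm _ _

theorem innerCLM_not_surjective [CompactSpace X] [T2Space X] [Infinite X] [CompleteSpace H]
    (Φ : C(X, H)) : ¬ Function.Surjective (innerCLM Φ) := by
  obtain ⟨x₀, hx₀⟩ := exists_nhds_ne_neBot X
  refine (innerCLM Φ).not_surjective_of_continuousAt_evalCLM_comp (x₀ := x₀) ?_
  simp only [evalCLM_comp_innerCLM]
  exact ((innerSL ℝ).continuous.comp Φ.continuous).continuousAt

end ContinuousMap

theorem RKHS_with_continuous_kernel_proper_subset_general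
    {X : Type*} [MetricSpace X] [CompactSpace X] (hX : ¬ Countable X)
    (H : Type*) [NormedAddCommGroup H] [InnerProductSpace ℝ H] [CompleteSpace H]
    (ι : H →ₗ[ℝ] (X → ℝ))
    (k : X → X → ℝ) (Φ : X → H)
    (hfeat : ∀ x y : X, ι (Φ x) y = k y x)
    (hrep : ∀ (h : H) (x : X), ι h x = ⟪h, Φ x⟫)
    (hk : Continuous fun p : X × X => k p.1 p.2) :
    (¬ ∀ f : X → ℝ, Continuous f → f ∈ Set.range ι) ∧
      (∀ h : H, Continuous (ι h)) ∧
      Set.range ι ⊂ {f : X → ℝ | Continuous f} := by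
  have hkernel : ∀ x y, ⟪Φ x, Φ y⟫ = k y x := fun x y => (hrep _ _).symm.trans (hfeat x y)
  have hΦ : Continuous Φ :=
    continuous_of_continuous_inner <| by
      simp_rw [hkernel]
      exact hk.comp continuous_swap
  have hι : ∀ h, ι h = ContinuousMap.innerCLM ⟨Φ, hΦ⟩ h := fun h => funext (hrep h)
  have hcont : ∀ h, Continuous (ι h) := fun h => hι h ▸ (ContinuousMap.innerCLM _ h).continuous
  have hnot : ¬ ∀ f : X → ℝ, Continuous f → f ∈ Set.range ι := by
    intro hall
    have : Infinite X := not_finite_iff_infinite.1 fun _ => hX inferInstance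
    refine ContinuousMap.innerCLM_not_surjective ⟨Φ, hΦ⟩ fun f => ?_
    obtain ⟨h, hf⟩ := hall f f.continuous
    exact ⟨h, DFunLike.coe_injective ((hι h).symm.trans hf)⟩
  exact ⟨hnot, hcont, fun _ ⟨h, hf⟩ => hf ▸ hcont h, fun hsub => hnot fun _ hf => hsub hf⟩

/-- For an uncountable compact metric space `X` and an RKHS `H` on `X` with continuous
kernel `k`, the inclusion `C(X) ⊆ H` fails; moreover every member of `H` is continuous
and `H` is a proper subset of `C(X)`. -/
theorem RKHS_with_continuous_kernel_proper_subset
    {X : Type*} [MetricSpace X] [CompactSpace X] (hX : ¬ Countable X)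
    (H : Type*) [NormedAddCommGroup H] [InnerProductSpace ℝ H] [CompleteSpace H]
    (ι : H →ₗ[ℝ] (X → ℝ)) (hinj : Function.Injective ι)
    (k : X → X → ℝ) (Φ : X → H)
    (hfeat : ∀ x y : X, ι (Φ x) y = k y x)
    (hrep : ∀ (h : H) (x : X), ι h x = ⟪h, Φ x⟫)
    (hk : Continuous fun p : X × X => k p.1 p.2) :
    (¬ ∀ f : X → ℝ, Continuous f → f ∈ Set.range ι) ∧
      (∀ h : H, Continuous (ι h)) ∧
      Set.range ι ⊂ {f : X → ℝ | Continuous f} :=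
  RKHS_with_continuous_kernel_proper_subset_general hX H ι k Φ hfeat hrep hk
end
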